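/- arXiv:1601.03634 — 3 statements merged into one kernel-verified Lean document; each statement's English description precedes it below -/
import Mathlib

section
/- Let X be a free abelian group, X_0 ⊆ X a subgroup, P ⊆ X a submonoid, W a group acting on X fixing X_0 pointwise, and let φ, ψ: X → ℤ^l be functions such that (1) φ(λ) ∈ ℕ^l ⟺ λ ∈ P and likewise for ψ, (3) for all λ, λ' there exists w ∈ W with φ(w·λ + λ') = φ(λ) + φ(λ'), and similarly for ψ, and (4) φ|_{X_0} and ψ|_{X_0} are bijections onto ℤ^l. Then there is a permutation σ ∈ S_l of coordinates such that φ(λ)_i = ψ(λ)_{σ(i)} for all λ ∈ X and i. -/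
/-!
Since `W` fixes `X₀` pointwise, condition (3) makes `φ` and `ψ` additive in an argument from
`X₀`, so by (4) both restrict to isomorphisms `X₀ ≃+ ℤ^l`. By (1) the automorphism
`θ = ψ ∘ φ⁻¹` of `ℤ^l` preserves the cone `ℕ^l` in both directions, hence permutes its minimal
nonzero elements, the standard basis vectors: `θ` is a coordinate permutation `σ`. Finally
`φ` and `ψ ∘ σ` agree on `X₀` and have the same nonnegative vectors; translating any `x` by a
suitable element of `X₀` then forces `φ x = ψ x ∘ σ` coordinate by coordinate.
-/

open Function

theorem map_add_of_mem_of_forall_smul_eq {W X M : Type*} [SMul W X] [Add X] [Add M] {S : Set X}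
    (hfix : ∀ (w : W), ∀ x ∈ S, w • x = x) {f : X → M}
    (hf : ∀ x y : X, ∃ w : W, f (w • x + y) = f x + f y) :
    ∀ x ∈ S, ∀ y, f (x + y) = f x + f y := by
  intro x hx y
  obtain ⟨w, hw⟩ := hf x y
  rwa [hfix w x hx] at hw

noncomputable def AddSubgroup.addEquivOfBijective {X M : Type*} [AddGroup X] [Add M]
    (X0 : AddSubgroup X) {f : X → M} (hf : ∀ x ∈ X0, ∀ y, f (x + y) = f x + f y)
    (hbij : Bijective fun x : X0 => f x) : X0 ≃+ M :=
  AddEquiv.ofBijective (⟨fun x : X0 => f x, fun a b => hf a a.2 b⟩ : X0 →ₙ+ M) hbij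

theorem AddEquiv.minimal_pos_apply_iff {G H : Type*} [AddCommGroup G] [PartialOrder G]
    [IsOrderedAddMonoid G] [AddCommGroup H] [PartialOrder H] [IsOrderedAddMonoid H]
    (θ : G ≃+ H) (hθ : ∀ v, 0 ≤ θ v ↔ 0 ≤ v) {v : G} :
    Minimal (0 < ·) (θ v) ↔ Minimal (0 < ·) v := by
  have hle : ∀ v w, θ v ≤ θ w ↔ v ≤ w := fun v w => by
    rw [← sub_nonneg, ← map_sub, hθ, sub_nonneg]
  have hlt : ∀ v, 0 < θ v ↔ 0 < v := fun v => by
    rw [lt_iff_le_not_ge, lt_iff_le_not_ge, ← map_zero θ, hle, hle]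
  simp only [Minimal, θ.surjective.forall, hlt, hle]

theorem Pi.minimal_pos_iff_exists_eq_single {ι : Type*} [DecidableEq ι] {v : ι → ℤ} :
    Minimal (0 < ·) v ↔ ∃ i, v = Pi.single i 1 := by
  constructor
  · intro hv
    obtain ⟨hv0, i, hvi⟩ := Pi.lt_def.mp hv.prop
    have hle : Pi.single i 1 ≤ v := fun j => by
      rcases eq_or_ne j i with rfl | hj
      · simpa using Int.lt_iff_add_one_le.mp hvi
      · simpa [hj] using hv0 j
    exact ⟨i, le_antisymm (hv.le_of_le (Pi.single_pos.mpr one_pos) hle) hle⟩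
  · rintro ⟨i, rfl⟩
    refine ⟨Pi.single_pos.mpr one_pos, fun w hw hwi j => ?_⟩
    obtain ⟨hw0, k, hwk⟩ := Pi.lt_def.mp hw
    obtain rfl : k = i := by
      by_contra hki
      simpa [hki] using (hwi k).trans_lt' hwk
    rcases eq_or_ne j k with rfl | hj
    · simpa using Int.lt_iff_add_one_le.mp hwk
    · simpa [hj] using hw0 j

theorem AddEquiv.exists_perm_apply_eq_of_nonneg_iff {ι : Type*} [Finite ι] [DecidableEq ι]
    (θ : (ι → ℤ) ≃+ (ι → ℤ)) (hθ : ∀ v, 0 ≤ θ v ↔ 0 ≤ v) :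
    ∃ σ : Equiv.Perm ι, ∀ v i, θ v (σ i) = v i := by
  have hsingle : ∀ i, ∃ j, θ (Pi.single i 1) = Pi.single j 1 := fun i =>
    Pi.minimal_pos_iff_exists_eq_single.mp <| (θ.minimal_pos_apply_iff hθ).mpr <|
      Pi.minimal_pos_iff_exists_eq_single.mpr ⟨i, rfl⟩
  choose f hf using hsingle
  have hf_inj : Injective f := fun i j hij => by
    have := θ.injective ((hf i).trans (hij ▸ (hf j).symm))
    simpa [Pi.single_apply] using congrFun this i
  refine ⟨Equiv.ofBijective f (Finite.injective_iff_bijective.mp hf_inj), fun v i => ?_⟩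
  suffices (Pi.evalAddMonoidHom _ (f i)).comp θ.toAddMonoidHom = Pi.evalAddMonoidHom _ i from
    DFunLike.congr_fun this v
  ext j
  simp [hf, Pi.single_apply, hf_inj.eq_iff]

section Extension

variable {X ι M : Type*} [AddCommGroup X] [AddCommGroup M] [LinearOrder M] [IsOrderedAddMonoid M]
  {X0 : AddSubgroup X} {φ ψ : X → ι → M}

theorem apply_le_apply_of_eqOn_of_nonneg_imp (hφ : ∀ x ∈ X0, ∀ y, φ (x + y) = φ x + φ y)
    (hψ : ∀ x ∈ X0, ∀ y, ψ (x + y) = ψ x + ψ y) (hsurj : Surjective fun x : X0 => φ x)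
    (heq : Set.EqOn φ ψ X0) (hpos : ∀ x, 0 ≤ φ x → 0 ≤ ψ x) (x : X) (i : ι) :
    φ x i ≤ ψ x i := by
  classical
  -- chosen so that `φ (x0 + x)` is nonnegative with `i`-th coordinate `0`
  obtain ⟨⟨x0, hx0⟩, hc : φ x0 = _⟩ := hsurj (update (-(φ x ⊓ ψ x)) i (-φ x i))
  have hφpos : 0 ≤ φ (x0 + x) := fun j => by
    rw [hφ x0 hx0, Pi.add_apply, hc]
    rcases eq_or_ne j i with rfl | hj
    · simp
    · simp [hj]
  have := hpos _ hφpos i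
  rw [hψ x0 hx0, Pi.add_apply, ← heq hx0, hc] at this
  simpa using this

theorem eq_of_eqOn_of_nonneg_iff (hφ : ∀ x ∈ X0, ∀ y, φ (x + y) = φ x + φ y)
    (hψ : ∀ x ∈ X0, ∀ y, ψ (x + y) = ψ x + ψ y) (hsurj : Surjective fun x : X0 => φ x)
    (heq : Set.EqOn φ ψ X0) (hpos : ∀ x, 0 ≤ φ x ↔ 0 ≤ ψ x) : φ = ψ := by
  have hsurj' : Surjective fun x : X0 => ψ x := fun v => by
    obtain ⟨x, rfl⟩ := hsurj v
    exact ⟨x, (heq x.2).symm⟩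
  funext x i
  exact le_antisymm (apply_le_apply_of_eqOn_of_nonneg_imp hφ hψ hsurj heq (hpos · |>.mp) x i)
    (apply_le_apply_of_eqOn_of_nonneg_imp hψ hφ hsurj' heq.symm (hpos · |>.mpr) x i)

end Extension

theorem stmt5_general {X : Type*} [AddCommGroup X]
    {W : Type*} [Group W] [DistribMulAction W X]
    (X0 : AddSubgroup X) (P : AddSubmonoid X) (l : ℕ)
    (htriv : ∀ (w : W), ∀ x ∈ X0, w • x = x)
    (φ ψ : X → Fin l → ℤ)
    (hφ1 : ∀ x, (∀ i, 0 ≤ φ x i) ↔ x ∈ P)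
    (hψ1 : ∀ x, (∀ i, 0 ≤ ψ x i) ↔ x ∈ P)
    (hφ3 : ∀ x y : X, ∃ w : W, φ (w • x + y) = φ x + φ y)
    (hψ3 : ∀ x y : X, ∃ w : W, ψ (w • x + y) = ψ x + ψ y)
    (hφ4 : Function.Bijective fun x : X0 => φ x)
    (hψ4 : Function.Bijective fun x : X0 => ψ x) :
    ∃ σ : Equiv.Perm (Fin l), ∀ (x : X) (i : Fin l), φ x i = ψ x (σ i) := by
  have hφadd := map_add_of_mem_of_forall_smul_eq (S := X0) htriv hφ3
  have hψadd := map_add_of_mem_of_forall_smul_eq (S := X0) htriv hψ3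
  let A := X0.addEquivOfBijective hφadd hφ4
  let B := X0.addEquivOfBijective hψadd hψ4
  have hθ : ∀ x : X0, A.symm.trans B (A x) = ψ x := fun x => congrArg B (A.symm_apply_apply x)
  obtain ⟨σ, hσ⟩ := (A.symm.trans B).exists_perm_apply_eq_of_nonneg_iff <| A.surjective.forall.mpr
    fun x => by rw [hθ]; exact (hψ1 x).trans (hφ1 x).symm
  suffices h : φ = fun x i => ψ x (σ i) from ⟨σ, fun x i => congrFun (congrFun h x) i⟩
  refine eq_of_eqOn_of_nonneg_iff hφadd (fun x hx y => ?_) hφ4.2 (fun x hx => ?_) (fun x => ?_)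
  · funext i
    exact congrFun (hψadd x hx y) (σ i)
  · funext i
    rw [← hσ (φ x) i]
    exact congrFun (hθ ⟨x, hx⟩) (σ i)
  · simp only [Pi.le_def, Pi.zero_apply, hφ1, σ.forall_congr_right (q := fun j => 0 ≤ ψ x j),
      hψ1]

/-- Uniqueness of the function `φ` of Assumption 3.4: two functions satisfying
conditions (1), (3) and (4) differ by a permutation of coordinates. -/
theorem stmt5 {X : Type*} [AddCommGroup X] [Module.Free ℤ X]
    {W : Type*} [Group W] [DistribMulAction W X]
    (X0 : AddSubgroup X) (P : AddSubmonoid X) (l : ℕ)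
    (htriv : ∀ (w : W), ∀ x ∈ X0, w • x = x)
    (φ ψ : X → Fin l → ℤ)
    (hφ1 : ∀ x, (∀ i, 0 ≤ φ x i) ↔ x ∈ P)
    (hψ1 : ∀ x, (∀ i, 0 ≤ ψ x i) ↔ x ∈ P)
    (hφ3 : ∀ x y : X, ∃ w : W, φ (w • x + y) = φ x + φ y)
    (hψ3 : ∀ x y : X, ∃ w : W, ψ (w • x + y) = ψ x + ψ y)
    (hφ4 : Function.Bijective fun x : X0 => φ x)
    (hψ4 : Function.Bijective fun x : X0 => ψ x) :
    ∃ σ : Equiv.Perm (Fin l), ∀ (x : X) (i : Fin l), φ x i = ψ x (σ i) :=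
  stmt5_general X0 P l htriv φ ψ hφ1 hψ1 hφ3 hψ3 hφ4 hψ4
end

section
/- Define φ: ℤ^{2l} → ℤ by φ(λ) = Σ_{i=1}^l min(λ_i, λ_{i'}) with i' = 2l+1−i, and let K ⊆ ℤ^{2l} be generated by (e_i+e_{i'})−(e_j+e_{j'}). Then φ(λ) ≥ 0 if and only if λ ∈ ℕ^{2l} + K, i.e., λ differs from a vector with nonnegative coordinates by an element of K. -/
/-!
The functional `φ` is invariant under translation by `K`: each `f_i = e_i + e_{i'}` with
`i ≤ l` raises exactly one summand `min(λ_i, λ_{i'})` of `φ` by one, so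
`φ(λ + f_i - f_j) = φ(λ)`. Since `φ ≥ 0` on `ℕ^{2l}`, this gives one direction.
Conversely, put `m_a = min(λ_a, λ_{a'})`; the vector `m` is symmetric, hence
`m = Σ_{i ≤ l} m_i f_i`, and `λ = (λ - m + φ(λ) f_1) + Σ_{i ≤ l} m_i (f_i - f_1)`
with both `λ - m` and `φ(λ) f_1` nonnegative.
-/
/-- The index `i\x27 = 2l+1-i` (in 0-based terms, `2l-1-i`). -/
def idual {l : ℕ} (i : Fin (2 * l)) : Fin (2 * l) :=
  ⟨2 * l - 1 - i.val, by have := i.isLt; omega⟩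

/-- The standard basis vector `e_i` of `ℤ^{2l}`. -/
def ee {l : ℕ} (i : Fin (2 * l)) : Fin (2 * l) → ℤ := Pi.single i 1

/-- The subgroup `K ⊆ ℤ^{2l}` generated by `(e_i + e_{i\x27}) − (e_j + e_{j\x27})`
for `i, j ≤ l`; the character lattice of the torus of `GSp_{2l}` is `ℤ^{2l}/K`. -/
def Kgsp (l : ℕ) : AddSubgroup (Fin (2 * l) → ℤ) :=
  AddSubgroup.closure
    { v | ∃ i j : Fin (2 * l), i.val < l ∧ j.val < l ∧
        v = (ee i + ee (idual i)) - (ee j + ee (idual j)) }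

/-- `φ(λ) = Σ_{i=1}^l min(λ_i, λ_{i'})`. -/
def phiGSp {l : ℕ} (lam : Fin (2 * l) → ℤ) : ℤ :=
  ∑ i ∈ Finset.univ.filter (fun i : Fin (2 * l) => i.val < l),
    min (lam i) (lam (idual i))

open Finset

namespace GSp

variable {l : ℕ}

@[simp]
lemma val_idual (i : Fin (2 * l)) : (idual i).val = 2 * l - 1 - i.val := rfl

@[simp]
lemma idual_idual (i : Fin (2 * l)) : idual (idual i) = i := by
  ext
  simp only [val_idual]
  omega

lemma idual_eq_iff {a b : Fin (2 * l)} : idual a = b ↔ a = idual b := by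
  constructor <;> rintro rfl <;> simp

/-- The indices `i ≤ l` of the paper (0-based: `i.val < l`). -/
def lowerHalf (l : ℕ) : Finset (Fin (2 * l)) :=
  univ.filter fun i : Fin (2 * l) => i.val < l

lemma mem_lowerHalf {i : Fin (2 * l)} : i ∈ lowerHalf l ↔ i.val < l := by
  simp [lowerHalf]

lemma idual_mem_lowerHalf {i : Fin (2 * l)} : idual i ∈ lowerHalf l ↔ i ∉ lowerHalf l := by
  have := i.isLt
  simp only [mem_lowerHalf, val_idual]
  omega

lemma phiGSp_eq_sum (lam : Fin (2 * l) → ℤ) :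
    phiGSp lam = ∑ i ∈ lowerHalf l, min (lam i) (lam (idual i)) := rfl

def eePair (i : Fin (2 * l)) : Fin (2 * l) → ℤ := ee i + ee (idual i)

lemma eePair_apply (i a : Fin (2 * l)) :
    eePair i a = (if a = i then 1 else 0) + (if idual a = i then 1 else 0) := by
  simp [eePair, ee, Pi.single_apply, idual_eq_iff]

lemma eePair_apply_idual (i a : Fin (2 * l)) : eePair i (idual a) = eePair i a := by
  rw [eePair_apply, eePair_apply, idual_idual, add_comm]

lemma eePair_nonneg (i a : Fin (2 * l)) : 0 ≤ eePair i a := by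
  rw [eePair_apply]
  positivity

lemma sum_lowerHalf_eePair {i : Fin (2 * l)} (hi : i ∈ lowerHalf l) :
    ∑ a ∈ lowerHalf l, eePair i a = 1 := by
  have hi' : idual i ∉ lowerHalf l := idual_mem_lowerHalf.not.mpr (not_not.mpr hi)
  simp only [eePair_apply, idual_eq_iff, sum_add_distrib, sum_ite_eq', hi, hi', if_true,
    if_false, add_zero]

lemma sum_lowerHalf_smul_eePair {v : Fin (2 * l) → ℤ} (hv : ∀ a, v (idual a) = v a) :
    ∑ i ∈ lowerHalf l, v i • eePair i = v := by
  ext a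
  simp only [Finset.sum_apply, Pi.smul_apply, eePair_apply, smul_eq_mul, mul_add, mul_ite,
    mul_one, mul_zero, sum_add_distrib, sum_ite_eq, idual_mem_lowerHalf, hv]
  by_cases ha : a ∈ lowerHalf l <;> simp [ha]

lemma phiGSp_add_smul_eePair (lam : Fin (2 * l) → ℤ) (c : ℤ) {i : Fin (2 * l)}
    (hi : i ∈ lowerHalf l) : phiGSp (lam + c • eePair i) = phiGSp lam + c := by
  simp only [phiGSp_eq_sum, Pi.add_apply, Pi.smul_apply, smul_eq_mul, eePair_apply_idual,
    min_add_add_right, sum_add_distrib, ← mul_sum, sum_lowerHalf_eePair hi, mul_one]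

lemma phiGSp_add_of_mem_Kgsp {κ : Fin (2 * l) → ℤ} (hκ : κ ∈ Kgsp l)
    (lam : Fin (2 * l) → ℤ) :
    phiGSp (lam + κ) = phiGSp lam := by
  induction hκ using AddSubgroup.closure_induction generalizing lam with
  | mem _ hv =>
    obtain ⟨i, j, hi, hj, rfl⟩ := hv
    have hshift :=
      phiGSp_add_smul_eePair (lam + (1 : ℤ) • eePair i) (-1) (mem_lowerHalf.mpr hj)
    rw [phiGSp_add_smul_eePair _ _ (mem_lowerHalf.mpr hi)] at hshift
    convert hshift using 2
    · simp only [eePair, one_smul, neg_one_smul]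
      abel
    · ring
  | zero => simp
  | add _ _ _ _ hx hy => rw [← add_assoc, hy, hx]
  | neg x _ hx => rw [← hx, neg_add_cancel_right]

lemma phiGSp_nonneg {ν : Fin (2 * l) → ℤ} (hν : ∀ a, 0 ≤ ν a) : 0 ≤ phiGSp ν :=
  sum_nonneg fun i _ => le_min (hν i) (hν (idual i))

lemma exists_nonneg_add_mem_Kgsp (hl : 0 < l) {lam : Fin (2 * l) → ℤ}
    (hphi : 0 ≤ phiGSp lam) :
    ∃ ν κ : Fin (2 * l) → ℤ, (∀ a, 0 ≤ ν a) ∧ κ ∈ Kgsp l ∧ lam = ν + κ := by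
  let i₀ : Fin (2 * l) := ⟨0, by omega⟩
  let m : Fin (2 * l) → ℤ := fun a => min (lam a) (lam (idual a))
  have hm : ∀ a, m (idual a) = m a := fun a => by simp only [m, idual_idual, min_comm]
  have hsum : ∑ i ∈ lowerHalf l, m i = phiGSp lam := rfl
  refine ⟨lam - m + phiGSp lam • eePair i₀,
    ∑ i ∈ lowerHalf l, m i • (eePair i - eePair i₀), fun a => ?_, ?_, ?_⟩
  · have hma : m a ≤ lam a := min_le_left _ _
    have hshift := mul_nonneg hphi (eePair_nonneg i₀ a)
    simp only [Pi.add_apply, Pi.sub_apply, Pi.smul_apply, smul_eq_mul]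
    linarith
  · refine AddSubgroup.sum_mem _ fun i hi => AddSubgroup.zsmul_mem _ ?_ _
    exact AddSubgroup.subset_closure ⟨i, i₀, mem_lowerHalf.mp hi, hl, rfl⟩
  · simp only [smul_sub, sum_sub_distrib, sum_lowerHalf_smul_eePair hm, ← sum_smul, hsum]
    abel

end GSp

open GSp in
/-- `φ(λ) ≥ 0` iff `λ ∈ ℕ^{2l} + K`. -/
theorem stmt14 (l : ℕ) (lam : Fin (2 * l) → ℤ) :
    0 ≤ phiGSp lam ↔
      ∃ ν κ : Fin (2 * l) → ℤ, (∀ a, 0 ≤ ν a) ∧ κ ∈ Kgsp l ∧ lam = ν + κ := by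
  constructor
  · intro hphi
    rcases l.eq_zero_or_pos with rfl | hl
    · exact ⟨lam, 0, fun a => a.elim0, zero_mem _, (add_zero lam).symm⟩
    · exact exists_nonneg_add_mem_Kgsp hl hphi
  · rintro ⟨ν, κ, hν, hκ, rfl⟩
    rw [phiGSp_add_of_mem_Kgsp hκ]
    exact phiGSp_nonneg hν
end

section
/- Let n = n_1 + … + n_l, M_i = {n_1+…+n_{i-1}+1, …, n_1+…+n_i}, and d_i = Σ_{j∈M_i} e_j ∈ ℤ^n. Define φ: ℤ^n → ℤ^l by φ(λ)_i = min_{a∈M_i} λ_a. Then φ satisfies all four conditions of Assumption 3.4 for the group W = S_{M_1} × … × S_{M_l} acting on ℤ^n by permuting coordinates, with P = ℕ^n and X_0 = the span of d_1,…,d_l: (1) φ(λ) ∈ ℕ^l ⟺ λ ∈ ℕ^n; (2) φ(mλ) = mφ(λ) for m ∈ ℕ; (3) for all λ, λ' there is w ∈ W with φ(w·λ+λ') = φ(λ)+φ(λ'); (4) φ restricted to span{d_1,…,d_l} is a bijection onto ℤ^l. -/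
/-!
Write `blk a` for the block containing the coordinate `a`, so that `φ λ i` is the least value of
`λ` on the block `M i`. Taking minima commutes with monotone maps, which gives (1) and (2).
For (3), let `w` swap, inside every block, a minimiser of `λ` with a minimiser of `λ'`: then
`λ ∘ w⁻¹ + λ'` attains `φ λ i + φ λ' i` at the minimiser of `λ'` in `M i`, and is bounded below
by it on `M i` since `w` preserves the blocks. For (4), the subgroup generated by the block
indicators `d i` consists of the blockwise constant vectors `c ∘ blk`, and `φ (c ∘ blk) = c`.
-/

open Finset

section BlockMin

variable {α ι β : Type*} {M : ι → Finset α}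

theorem blockMin_comp_of_monotone [PartialOrder β] {φ : (α → β) → ι → β}
    (hφ : ∀ lam i, IsLeast (lam '' M i) (φ lam i)) {f : β → β} (hf : Monotone f)
    (lam : α → β) : φ (f ∘ lam) = f ∘ φ lam := by
  funext i
  refine (hφ (f ∘ lam) i).unique ?_
  rw [Set.image_comp]
  exact hf.map_isLeast (hφ lam i)

theorem blockMin_nonneg_iff [Preorder β] [Zero β] {φ : (α → β) → ι → β}
    (hφ : ∀ lam i, IsLeast (lam '' M i) (φ lam i)) (hcover : ∀ a, ∃ i, a ∈ M i)
    (lam : α → β) : (∀ i, 0 ≤ φ lam i) ↔ ∀ a, 0 ≤ lam a := by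
  refine ⟨fun h a => ?_, fun h i => ?_⟩
  · obtain ⟨i, ha⟩ := hcover a
    exact (h i).trans ((hφ lam i).2 (Set.mem_image_of_mem lam ha))
  · obtain ⟨a, -, ha⟩ := (hφ lam i).1
    exact ha ▸ h a

theorem isLeast_image_comp_add [Add β] [Preorder β] [AddLeftMono β] [AddRightMono β]
    {s : Set α} {lam lam' : α → β} {m m' : β} (hm : IsLeast (lam '' s) m)
    (hm' : IsLeast (lam' '' s) m') {σ : α → α} (hσ : Set.MapsTo σ s s) {b : α} (hb : b ∈ s)
    (hσb : lam (σ b) = m) (hb' : lam' b = m') :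
    IsLeast ((fun x => lam (σ x) + lam' x) '' s) (m + m') := by
  refine ⟨⟨b, hb, by simp only [hσb, hb']⟩, ?_⟩
  rintro _ ⟨x, hx, rfl⟩
  exact add_le_add (hm.2 ⟨σ x, hσ hx, rfl⟩) (hm'.2 ⟨x, hx, rfl⟩)

theorem exists_perm_swap_in_blocks [DecidableEq α] (blk : α → ι) {a b : ι → α}
    (ha : ∀ i, blk (a i) = i) (hb : ∀ i, blk (b i) = i) :
    ∃ w : Equiv.Perm α, w⁻¹ = w ∧ (∀ x, blk (w x) = blk x) ∧ ∀ i, w (b i) = a i := by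
  set f : α → α := fun x => Equiv.swap (a (blk x)) (b (blk x)) x
  have hf : ∀ x, blk (f x) = blk x := by
    intro x
    simp only [f, Equiv.swap_apply_def]
    split_ifs <;> simp [ha, hb]
  have hinv : Function.Involutive f := by
    intro x
    change Equiv.swap (a (blk (f x))) (b (blk (f x))) (f x) = x
    rw [hf]
    exact Equiv.swap_apply_self _ _ x
  refine ⟨hinv.toPerm f, hinv.toPerm_symm, hf, fun i => ?_⟩
  change Equiv.swap (a (blk (b i))) (b (blk (b i))) (b i) = a i
  rw [hb, Equiv.swap_apply_right]

theorem exists_perm_blockMin_add [DecidableEq α] [Add β] [PartialOrder β] [AddLeftMono β]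
    [AddRightMono β] {φ : (α → β) → ι → β} (hφ : ∀ lam i, IsLeast (lam '' M i) (φ lam i))
    {blk : α → ι} (hblk : ∀ i a, a ∈ M i ↔ blk a = i) (lam lam' : α → β) :
    ∃ w : Equiv.Perm α, (∀ i, ∀ a ∈ M i, w a ∈ M i) ∧
      φ (fun a => lam (w⁻¹ a) + lam' a) = φ lam + φ lam' := by
  choose a ha hla using fun i => (hφ lam i).1
  choose b hb hlb using fun i => (hφ lam' i).1
  obtain ⟨w, hw_inv, hw_blk, hwb⟩ := exists_perm_swap_in_blocks blk
    (fun i => (hblk i (a i)).1 (ha i)) (fun i => (hblk i (b i)).1 (hb i))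
  have hw_mem : ∀ i, ∀ x ∈ M i, w x ∈ M i := fun i x hx => by
    rw [hblk] at hx ⊢
    rw [hw_blk, hx]
  refine ⟨w, hw_mem, funext fun i => (hφ _ i).unique ?_⟩
  rw [hw_inv]
  exact isLeast_image_comp_add (hφ lam i) (hφ lam' i) (hw_mem i) (hb i)
    (by rw [hwb, hla]) (hlb i)

theorem blockMin_comp_blk [Preorder β] {φ : (α → β) → ι → β}
    (hφ : ∀ lam i, IsLeast (lam '' M i) (φ lam i)) {blk : α → ι}
    (hblk : ∀ i a, a ∈ M i ↔ blk a = i) (c : ι → β) : φ (c ∘ blk) = c := by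
  funext i
  obtain ⟨a, ha, h⟩ := (hφ (c ∘ blk) i).1
  rw [← h, Function.comp_apply, (hblk i a).1 ha]

theorem mem_closure_range_blockIndicator_iff [Fintype ι] [DecidableEq α] {blk : α → ι}
    (hblk : ∀ i a, a ∈ M i ↔ blk a = i) {d : ι → α → ℤ}
    (hd : ∀ i a, d i a = if a ∈ M i then 1 else 0) (x : α → ℤ) :
    x ∈ AddSubgroup.closure (Set.range d) ↔ ∃ c : ι → ℤ, c ∘ blk = x := by
  have hsum : ∀ c : ι → ℤ, ∑ i, c i • d i = c ∘ blk := fun c => by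
    funext a
    simp only [Finset.sum_apply, Pi.smul_apply, hd, smul_eq_mul, mul_ite, mul_one, mul_zero]
    rw [Fintype.sum_eq_single (blk a) fun i hi => if_neg ((hblk i a).not.2 (Ne.symm hi)),
      if_pos ((hblk _ a).2 rfl), Function.comp_apply]
  rw [← Submodule.span_int_eq_addSubgroupClosure, Submodule.mem_toAddSubgroup,
    Submodule.mem_span_range_iff_exists_fun]
  simp only [hsum]

theorem blockMin_bijective_on_closure [Fintype ι] [DecidableEq α] {φ : (α → ℤ) → ι → ℤ}
    (hφ : ∀ lam i, IsLeast (lam '' M i) (φ lam i)) {blk : α → ι}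
    (hblk : ∀ i a, a ∈ M i ↔ blk a = i) {d : ι → α → ℤ}
    (hd : ∀ i a, d i a = if a ∈ M i then 1 else 0) :
    Function.Bijective (fun x : AddSubgroup.closure (Set.range d) => φ x) := by
  have hmem := mem_closure_range_blockIndicator_iff hblk hd
  refine ⟨?_, fun c => ⟨⟨c ∘ blk, (hmem _).2 ⟨c, rfl⟩⟩, blockMin_comp_blk hφ hblk c⟩⟩
  rintro ⟨x, hx⟩ ⟨y, hy⟩ h
  obtain ⟨c, rfl⟩ := (hmem x).1 hx
  obtain ⟨c', rfl⟩ := (hmem y).1 hy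
  simp only [blockMin_comp_blk hφ hblk] at h
  subst h
  rfl

end BlockMin

section Composition

variable {l : ℕ} (nn : Fin l → ℕ)

theorem sum_filter_lt_eq_sum_castLE (i : Fin l) :
    ∑ j ∈ univ.filter (· < i), nn j = ∑ j : Fin i, nn (Fin.castLE i.2.le j) := by
  have hmap : (univ : Finset (Fin i)).map (Fin.castLEEmb i.2.le) = univ.filter (· < i) := by
    ext j
    simp only [mem_map, mem_univ, true_and, mem_filter, Fin.castLEEmb_apply]
    refine ⟨?_, fun h => ⟨⟨j, h⟩, rfl⟩⟩
    rintro ⟨k, rfl⟩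
    exact k.2
  rw [← hmap, sum_map]
  rfl

theorem sum_filter_lt_add_le {i j : Fin l} (hij : i < j) :
    ∑ k ∈ univ.filter (· < i), nn k + nn i ≤ ∑ k ∈ univ.filter (· < j), nn k := by
  rw [add_comm, ← sum_insert (by simp)]
  refine sum_le_sum_of_subset fun k hk => ?_
  simp only [mem_insert, mem_filter, mem_univ, true_and] at hk ⊢
  rcases hk with rfl | hk
  exacts [hij, hk.trans hij]

theorem finSigmaFinEquiv_symm_fst_eq_iff (a : Fin (∑ i, nn i)) (i : Fin l) :
    (finSigmaFinEquiv.symm a).1 = i ↔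
      ∑ j ∈ univ.filter (· < i), nn j ≤ a ∧ a < ∑ j ∈ univ.filter (· < i), nn j + nn i := by
  set k := finSigmaFinEquiv.symm a
  have ha : (a : ℕ) = ∑ j ∈ univ.filter (· < k.1), nn j + k.2 := by
    rw [sum_filter_lt_eq_sum_castLE, ← finSigmaFinEquiv_apply, Equiv.apply_symm_apply]
  have hk := k.2.isLt
  refine ⟨by rintro rfl; omega, fun ⟨h₁, h₂⟩ => ?_⟩
  by_contra hne
  rcases lt_or_gt_of_ne hne with h | h <;> have := sum_filter_lt_add_le nn h <;> omega

end Composition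

theorem stmt15_general (l n : ℕ) (nn : Fin l → ℕ)
    (hn : n = ∑ i, nn i)
    (M : Fin l → Finset (Fin n))
    (hM : ∀ (i : Fin l) (a : Fin n), a ∈ M i ↔
      (∑ j ∈ Finset.univ.filter (fun j => j < i), nn j) ≤ a.val ∧
        a.val < (∑ j ∈ Finset.univ.filter (fun j => j < i), nn j) + nn i)
    (d : Fin l → (Fin n → ℤ)) (hd : ∀ i a, d i a = if a ∈ M i then 1 else 0)
    (φ : (Fin n → ℤ) → Fin l → ℤ)
    (hφ : ∀ (lam : Fin n → ℤ) (i : Fin l),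
      (∃ a ∈ M i, φ lam i = lam a) ∧ ∀ a ∈ M i, φ lam i ≤ lam a) :
    (∀ lam, (∀ i, 0 ≤ φ lam i) ↔ ∀ a, 0 ≤ lam a) ∧
    (∀ (m : ℕ) (lam), φ (m • lam) = m • φ lam) ∧
    (∀ lam lam', ∃ w : Equiv.Perm (Fin n), (∀ i, ∀ a ∈ M i, w a ∈ M i) ∧
      φ (fun a => lam (w⁻¹ a) + lam' a) = φ lam + φ lam') ∧
    Function.Bijective
      (fun x : AddSubgroup.closure (Set.range d) => φ (x : Fin n → ℤ)) := by
  subst hn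
  have hblk : ∀ i a, a ∈ M i ↔ (finSigmaFinEquiv.symm a).1 = i :=
    fun i a => (hM i a).trans (finSigmaFinEquiv_symm_fst_eq_iff nn a i).symm
  have hmin : ∀ lam i, IsLeast (lam '' M i) (φ lam i) := fun lam i =>
    ⟨let ⟨a, ha, h⟩ := (hφ lam i).1; ⟨a, ha, h.symm⟩, Set.forall_mem_image.2 (hφ lam i).2⟩
  refine ⟨blockMin_nonneg_iff hmin fun a => ⟨_, (hblk _ a).2 rfl⟩, fun m lam => ?_,
    exists_perm_blockMin_add hmin hblk, blockMin_bijective_on_closure hmin hblk hd⟩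
  exact blockMin_comp_of_monotone hmin (fun _ _ h => nsmul_le_nsmul_right h m) lam

/-- The Levi case `GL_{n₁} × ⋯ × GL_{n_l} ⊆ GL_n`: the function
`φ(λ)ᵢ = min_{a ∈ Mᵢ} λ_a` satisfies all four conditions of Assumption 3.4,
with `W = S_{M₁} × ⋯ × S_{M_l}`, `P = ℕ^n` and `X₀ = span{d₁,…,d_l}`. -/
theorem stmt15 (l n : ℕ) (nn : Fin l → ℕ) (hpos : ∀ i, 0 < nn i)
    (hn : n = ∑ i, nn i)
    (M : Fin l → Finset (Fin n))
    (hM : ∀ (i : Fin l) (a : Fin n), a ∈ M i ↔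
      (∑ j ∈ Finset.univ.filter (fun j => j < i), nn j) ≤ a.val ∧
        a.val < (∑ j ∈ Finset.univ.filter (fun j => j < i), nn j) + nn i)
    (d : Fin l → (Fin n → ℤ)) (hd : ∀ i a, d i a = if a ∈ M i then 1 else 0)
    (φ : (Fin n → ℤ) → Fin l → ℤ)
    (hφ : ∀ (lam : Fin n → ℤ) (i : Fin l),
      (∃ a ∈ M i, φ lam i = lam a) ∧ ∀ a ∈ M i, φ lam i ≤ lam a) :
    (∀ lam, (∀ i, 0 ≤ φ lam i) ↔ ∀ a, 0 ≤ lam a) ∧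
    (∀ (m : ℕ) (lam), φ (m • lam) = m • φ lam) ∧
    (∀ lam lam', ∃ w : Equiv.Perm (Fin n), (∀ i, ∀ a ∈ M i, w a ∈ M i) ∧
      φ (fun a => lam (w⁻¹ a) + lam' a) = φ lam + φ lam') ∧
    Function.Bijective
      (fun x : AddSubgroup.closure (Set.range d) => φ (x : Fin n → ℤ)) :=
  stmt15_general l n nn hn M hM d hd φ hφ
end
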